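/- Let g(x) = (c₁/250)·(251 Φ̄(x) + φ(x)) and h(x) = c₁·(1 + (1 + r(√3))/250)·Φ̄(x), where c₁ = 1/(4 Φ̄(√2)). Then g(x) ≤ h(x) for all x ≤ √3 and g(x) ≥ h(x) for all x ≥ √3. -/
import Mathlib


open MeasureTheory Real Set

noncomputable def phi (x : ℝ) : ℝ := Real.exp (-x^2/2) / Real.sqrt (2*Real.pi)
noncomputable def Phibar (x : ℝ) : ℝ := ∫ u in Set.Ioi x, phi u
noncomputable def mills (x : ℝ) : ℝ := phi x / Phibar x
noncomputable def c1 : ℝ := 1 / (4 * Phibar (Real.sqrt 2))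
noncomputable def g (x : ℝ) : ℝ := c1/250 * (251 * Phibar x + phi x)
noncomputable def h (x : ℝ) : ℝ := c1 * (1 + (1 + mills (Real.sqrt 3))/250) * Phibar x

lemma phi_pos (x : ℝ) : 0 < phi x := by
  unfold phi
  have : 0 < Real.sqrt (2*Real.pi) := Real.sqrt_pos.2 (by positivity)
  positivity

lemma integrable_phi : Integrable phi := by
  have h : Integrable (fun x : ℝ => Real.exp (-(1/2 : ℝ) * x^2)) :=
    integrable_exp_neg_mul_sq (by norm_num)
  have := h.div_const (Real.sqrt (2*Real.pi))
  convert this using 2 with x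
  unfold phi
  ring_nf

lemma Phibar_pos (x : ℝ) : 0 < Phibar x := by
  unfold Phibar
  rw [setIntegral_pos_iff_support_of_nonneg_ae]
  · have : Function.support phi = Set.univ := by
      ext y; simp [Function.mem_support, (phi_pos y).ne']
    rw [this]
    simp [Real.volume_Ioi]
  · filter_upwards with y using (phi_pos y).le
  · exact integrable_phi.integrableOn

noncomputable def J (x t : ℝ) : ℝ := Real.exp (-t^2/2 - x*t)

lemma integrable_J (x : ℝ) : Integrable (J x) := by
  have h : Integrable (fun t : ℝ => Real.exp (-(1/2 : ℝ) * t^2)) :=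
    integrable_exp_neg_mul_sq (by norm_num)
  have h2 : Integrable (fun t : ℝ => Real.exp (-(1/2 : ℝ) * (t + x)^2)) := h.comp_add_right x
  have h3 := h2.const_mul (Real.exp (x^2/2))
  convert h3 using 2 with t
  unfold J
  rw [← Real.exp_add]
  ring_nf

lemma Phibar_eq (x : ℝ) : Phibar x = phi x * ∫ t in Set.Ioi (0:ℝ), J x t := by
  have hmp : MeasurePreserving (fun t : ℝ => t + x) volume volume :=
    measurePreserving_add_right volume x
  have hemb : MeasurableEmbedding (fun t : ℝ => t + x) :=
    (Homeomorph.addRight x).measurableEmbedding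
  have hpre : (fun t : ℝ => t + x) ⁻¹' (Set.Ioi x) = Set.Ioi 0 := by
    ext t; simp [lt_add_iff_pos_left]
  have h1 : ∫ t in (fun t : ℝ => t + x) ⁻¹' (Set.Ioi x), phi (t + x) = ∫ u in Set.Ioi x, phi u :=
    hmp.setIntegral_preimage_emb hemb phi (Set.Ioi x)
  rw [hpre] at h1
  unfold Phibar
  rw [← h1]
  rw [← integral_const_mul]
  congr 1 with t
  unfold phi J
  rw [div_mul_eq_mul_div, ← Real.exp_add]
  ring_nf

lemma J_int_anti {x y : ℝ} (hxy : x ≤ y) :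
    ∫ t in Set.Ioi (0:ℝ), J y t ≤ ∫ t in Set.Ioi (0:ℝ), J x t := by
  apply setIntegral_mono_on (integrable_J y).integrableOn (integrable_J x).integrableOn
    measurableSet_Ioi
  intro t ht
  unfold J
  apply Real.exp_le_exp.2
  nlinarith [ht.out]

lemma J_int_pos (x : ℝ) : 0 < ∫ t in Set.Ioi (0:ℝ), J x t := by
  have h := Phibar_eq x
  have hP := Phibar_pos x
  have hp := phi_pos x
  nlinarith [mul_pos hp hP]

lemma mills_mono {x y : ℝ} (hxy : x ≤ y) : mills x ≤ mills y := by
  have hx := Phibar_eq x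
  have hy := Phibar_eq y
  have hIx := J_int_pos x
  have hIy := J_int_pos y
  have hanti := J_int_anti hxy
  unfold mills
  rw [hx, hy]
  rw [div_le_div_iff₀ (mul_pos (phi_pos x) (J_int_pos x)) (mul_pos (phi_pos y) (J_int_pos y))]
  have hpx := (phi_pos x).le
  have hpy := (phi_pos y).le
  nlinarith [mul_nonneg hpx hpy]

lemma mills_phi_le {x y : ℝ} (hxy : x ≤ y) : phi x ≤ mills y * Phibar x := by
  have h := mills_mono hxy
  have hP := Phibar_pos x
  have : phi x / Phibar x ≤ mills y := h
  rwa [div_le_iff₀ hP] at this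

lemma mills_phi_ge {x y : ℝ} (hxy : y ≤ x) : mills y * Phibar x ≤ phi x := by
  have h := mills_mono hxy
  have hP := Phibar_pos x
  have : mills y ≤ phi x / Phibar x := h
  rwa [le_div_iff₀ hP] at this

lemma c1_pos : 0 < c1 := by
  unfold c1
  have := Phibar_pos (Real.sqrt 2)
  positivity

theorem g_le_h_iff :
    (∀ x : ℝ, x ≤ Real.sqrt 3 → g x ≤ h x) ∧ (∀ x : ℝ, Real.sqrt 3 ≤ x → h x ≤ g x) := by
  have hc := c1_pos
  constructor
  · intro x hx
    have key := mills_phi_le hx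
    unfold g h
    nlinarith [mul_le_mul_of_nonneg_left key hc.le]
  · intro x hx
    have key := mills_phi_ge hx
    unfold g h
    nlinarith [mul_le_mul_of_nonneg_left key hc.le]
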